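/- arXiv:1602.04053 — 6 statements merged into one kernel-verified Lean document; each statement's English description precedes it below -/
import Mathlib

section
/- Let a = ρ·e^{iζ} with 0 ≤ ρ < 1 and ζ ∈ ℝ, and let 0 < r < 1. Then the Möbius transformation M_a(x) = (x - a)/(conj(a)·x - 1) maps the open ball B(0, r) ⊂ ℂ onto the open ball B(C, R) with center C = ρ(r² - 1)/(ρ²r² - 1) · e^{iζ} and radius R = r(ρ² - 1)/(ρ²r² - 1). -/
open Complex

/-- The Möbius transformation `M_a(x) = (x - a) / (conj a * x - 1)`. -/
noncomputable def mobius (a x : ℂ) : ℂ := (x - a) / ((starRingEnd ℂ) a * x - 1)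

/-!
For `‖a‖ < 1` and `0 < r ≤ 1`, put `q = 1 - ‖a‖² r²`, `t = (1 - r²) / q` and
`k = (1 - ‖a‖²) / q`. Then `M_a(x) - t a = k (x - r² a) / (conj a x - 1)`, and the identity
`‖x - r² a‖² - r² ‖conj a x - 1‖² = q (‖x‖² - r²)` shows that `‖M_a(x) - t a‖ < k r` exactly
when `‖x‖ < r`. Since `M_a` is an involution away from its pole `1 / conj a`, which lies
outside both balls (`‖t a‖ + k r ≤ 1`), this determines the image of `B(0, r)`.
-/

open ComplexConjugate Metric

noncomputable def mobiusBallCenter (a : ℂ) (r : ℝ) : ℂ :=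
  ((1 - r ^ 2) / (1 - ‖a‖ ^ 2 * r ^ 2) : ℝ) * a

noncomputable def mobiusBallRadius (a : ℂ) (r : ℝ) : ℝ :=
  r * (1 - ‖a‖ ^ 2) / (1 - ‖a‖ ^ 2 * r ^ 2)

section

variable {a x : ℂ} {r : ℝ}

lemma one_sub_norm_sq_mul_sq_pos (hr : 0 ≤ r) (har : ‖a‖ * r < 1) :
    0 < 1 - ‖a‖ ^ 2 * r ^ 2 := by
  nlinarith [mul_nonneg (norm_nonneg a) hr]

lemma conj_mul_sub_one_ne_zero (ha : ‖a‖ < 1) (hx : ‖x‖ ≤ 1) : conj a * x - 1 ≠ 0 := by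
  rw [sub_ne_zero]
  intro h
  have : ‖a‖ * ‖x‖ = 1 := by rw [← norm_conj a, ← norm_mul, h, norm_one]
  nlinarith [norm_nonneg a]

lemma conj_mul_mobius_sub_one (hx : conj a * x - 1 ≠ 0) :
    conj a * mobius a x - 1 = (1 - ‖a‖ ^ 2 : ℝ) / (conj a * x - 1) := by
  rw [mobius, eq_div_iff hx, sub_mul, mul_assoc, div_mul_cancel₀ _ hx]
  push_cast
  rw [← conj_mul']
  ring

lemma mobius_sub_self (hx : conj a * x - 1 ≠ 0) :
    mobius a x - a = x * (1 - ‖a‖ ^ 2 : ℝ) / (conj a * x - 1) := by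
  rw [mobius, eq_div_iff hx, sub_mul, div_mul_cancel₀ _ hx]
  push_cast
  rw [← mul_conj']
  ring

lemma conj_mul_mobius_sub_one_ne_zero (ha : ‖a‖ ≠ 1) (hx : conj a * x - 1 ≠ 0) :
    conj a * mobius a x - 1 ≠ 0 := by
  rw [conj_mul_mobius_sub_one hx]
  refine div_ne_zero ?_ hx
  rw [ofReal_ne_zero, sub_ne_zero, ne_comm, Ne,
    pow_eq_one_iff_of_nonneg (norm_nonneg a) two_ne_zero]
  exact ha

lemma mobius_mobius (ha : ‖a‖ ≠ 1) (hx : conj a * x - 1 ≠ 0) : mobius a (mobius a x) = x := by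
  show (mobius a x - a) / (conj a * mobius a x - 1) = x
  rw [div_eq_iff (conj_mul_mobius_sub_one_ne_zero ha hx), mobius_sub_self hx,
    conj_mul_mobius_sub_one hx, mul_div_assoc]

lemma mobius_sub_mobiusBallCenter (hr : 1 - ‖a‖ ^ 2 * r ^ 2 ≠ 0) (hx : conj a * x - 1 ≠ 0) :
    mobius a x - mobiusBallCenter a r =
      ((1 - ‖a‖ ^ 2) / (1 - ‖a‖ ^ 2 * r ^ 2) : ℝ) * ((x - r ^ 2 * a) / (conj a * x - 1)) := by
  have hr' : (1 - (‖a‖ : ℂ) ^ 2 * r ^ 2) ≠ 0 := by exact_mod_cast hr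
  rw [mobius, mobiusBallCenter, ← mul_div_assoc, div_sub' hx, div_left_inj' hx]
  push_cast
  rw [← mul_conj'] at hr' ⊢
  field_simp
  ring

lemma norm_sub_sq_sub_sq_mul_norm_sq (a x : ℂ) (r : ℝ) :
    ‖x - r ^ 2 * a‖ ^ 2 - r ^ 2 * ‖conj a * x - 1‖ ^ 2 =
      (1 - ‖a‖ ^ 2 * r ^ 2) * (‖x‖ ^ 2 - r ^ 2) := by
  simp only [Complex.sq_norm, normSq_apply]
  simp [sq]
  ring

lemma norm_sub_lt_mul_norm_iff (hr : 0 < r) (har : ‖a‖ * r < 1) :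
    ‖x - r ^ 2 * a‖ < r * ‖conj a * x - 1‖ ↔ ‖x‖ < r := by
  have hq := one_sub_norm_sq_mul_sq_pos hr.le har
  have key := norm_sub_sq_sub_sq_mul_norm_sq a x r
  rw [← pow_lt_pow_iff_left₀ (norm_nonneg _) (by positivity) two_ne_zero,
    ← pow_lt_pow_iff_left₀ (norm_nonneg x) hr.le two_ne_zero, mul_pow]
  constructor <;> intro h <;> nlinarith

lemma norm_mobius_sub_mobiusBallCenter_lt_iff (ha : ‖a‖ < 1) (hr : 0 < r) (har : ‖a‖ * r < 1)
    (hx : conj a * x - 1 ≠ 0) :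
    ‖mobius a x - mobiusBallCenter a r‖ < mobiusBallRadius a r ↔ ‖x‖ < r := by
  have hq := one_sub_norm_sq_mul_sq_pos hr.le har
  have hk : 0 < (1 - ‖a‖ ^ 2) / (1 - ‖a‖ ^ 2 * r ^ 2) := by
    apply div_pos _ hq
    nlinarith [norm_nonneg a]
  have hradius : mobiusBallRadius a r = (1 - ‖a‖ ^ 2) / (1 - ‖a‖ ^ 2 * r ^ 2) * r := by
    rw [mobiusBallRadius]
    ring
  rw [mobius_sub_mobiusBallCenter hq.ne' hx, hradius, norm_mul, norm_real,
    Real.norm_of_nonneg hk.le, mul_lt_mul_iff_right₀ hk, norm_div, div_lt_iff₀ (norm_pos_iff.2 hx)]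
  exact norm_sub_lt_mul_norm_iff hr har

lemma ball_mobiusBallCenter_subset_ball_one (ha : ‖a‖ < 1) (hr : 0 < r) (hr1 : r ≤ 1) :
    ball (mobiusBallCenter a r) (mobiusBallRadius a r) ⊆ ball 0 1 := by
  have hq := one_sub_norm_sq_mul_sq_pos hr.le (by nlinarith [norm_nonneg a])
  have ht : 0 ≤ (1 - r ^ 2) / (1 - ‖a‖ ^ 2 * r ^ 2) := div_nonneg (by nlinarith) hq.le
  apply ball_subset_ball'
  rw [dist_zero_right, mobiusBallCenter, mobiusBallRadius, norm_mul, norm_real,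
    Real.norm_of_nonneg ht, div_mul_eq_mul_div, ← add_div, div_le_one hq]
  -- `1 - ‖a‖² r² - r (1 - ‖a‖²) - (1 - r²) ‖a‖ = (1 - r) (1 - ‖a‖) (1 - r ‖a‖)`
  nlinarith [mul_nonneg (mul_nonneg (sub_nonneg.2 hr1) (sub_nonneg.2 ha.le))
    (sub_nonneg.2 (mul_le_one₀ hr1 (norm_nonneg a) ha.le))]

theorem mobius_image_ball (ha : ‖a‖ < 1) (hr : 0 < r) (hr1 : r ≤ 1) :
    mobius a '' ball 0 r = ball (mobiusBallCenter a r) (mobiusBallRadius a r) := by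
  have har : ‖a‖ * r < 1 := by nlinarith [norm_nonneg a]
  ext y
  constructor
  · rintro ⟨x, hx, rfl⟩
    rw [mem_ball_zero_iff] at hx
    rw [mem_ball_iff_norm]
    exact (norm_mobius_sub_mobiusBallCenter_lt_iff ha hr har
      (conj_mul_sub_one_ne_zero ha (by linarith))).2 hx
  · intro hy
    have hy1 : ‖y‖ ≤ 1 :=
      (mem_ball_zero_iff.1 (ball_mobiusBallCenter_subset_ball_one ha hr hr1 hy)).le
    have hyD := conj_mul_sub_one_ne_zero ha hy1
    have hxD := conj_mul_mobius_sub_one_ne_zero ha.ne hyD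
    refine ⟨mobius a y, mem_ball_zero_iff.2 ?_, mobius_mobius ha.ne hyD⟩
    rw [← norm_mobius_sub_mobiusBallCenter_lt_iff ha hr har hxD, mobius_mobius ha.ne hyD]
    exact mem_ball_iff_norm.1 hy

end

theorem mobius_image_concentric_ball (ρ ζ r : ℝ) (hρ0 : 0 ≤ ρ) (hρ1 : ρ < 1)
    (hr0 : 0 < r) (hr1 : r < 1) :
    mobius (ρ * Complex.exp (Complex.I * ζ)) '' Metric.ball (0 : ℂ) r =
      Metric.ball ((ρ * (r ^ 2 - 1) / (ρ ^ 2 * r ^ 2 - 1) : ℝ) * Complex.exp (Complex.I * ζ))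
        (r * (ρ ^ 2 - 1) / (ρ ^ 2 * r ^ 2 - 1)) := by
  have hnorm : ‖(ρ : ℂ) * Complex.exp (Complex.I * ζ)‖ = ρ := by
    rw [norm_mul, norm_exp_I_mul_ofReal, norm_real, Real.norm_of_nonneg hρ0, mul_one]
  rw [mobius_image_ball (by rwa [hnorm]) hr0 hr1.le, mobiusBallCenter, mobiusBallRadius, hnorm]
  congr 1
  · push_cast
    rw [← mul_assoc, ← neg_div_neg_eq]
    ring_nf
  · rw [← neg_div_neg_eq]
    ring_nf
end

section
/- For 0 ≤ ρ < 1 and integer n ≥ 1, the function conj(M_ρ(e^{iθ}))^n = ((e^{iθ} - ρ)/(ρe^{iθ} - 1))^{-n} has the absolutely convergent Fourier-type expansion: ((e^{iθ} - ρ)/(ρe^{iθ} - 1))^{-n} = Σ_{k'=0}^{∞} Σ_{k=0}^{n} (-1)^{n-k} · C(n + k' - 1, k') · C(n, k) · ρ^{k + k'} · e^{i(k - k' - n)θ}, valid for all θ ∈ ℝ. -/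
open Complex Finset

/-!
With `z = e^{iθ}` on the unit circle and `w = ρ / z`, the inner sum over `k` is, by the binomial
theorem, `((ρz - 1) / z)ⁿ · C(n + k' - 1, k') · w^{k'}`. Since `‖w‖ = ρ < 1`, the negative binomial
series `∑ C(n + k' - 1, k') w^{k'} = (1 - w)⁻ⁿ` converges, and
`((ρz - 1) / z)ⁿ (1 - ρ / z)⁻ⁿ = ((z - ρ) / (ρz - 1))⁻ⁿ`. Absolute convergence is automatic in `ℂ`.
-/

theorem hasSum_choose_sub_one_mul_geometric {𝕜 : Type*} [NormedDivisionRing 𝕜] [CompleteSpace 𝕜]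
    (n : ℕ) {w : 𝕜} (hw : ‖w‖ < 1) :
    HasSum (fun k : ℕ => ((n + k - 1).choose k : 𝕜) * w ^ k) (1 / (1 - w) ^ n) := by
  rcases n with _ | m
  · convert hasSum_single (f := fun k : ℕ => ((0 + k - 1).choose k : 𝕜) * w ^ k) 0 ?_ using 1
    · simp
    · intro k hk
      simp [Nat.choose_eq_zero_of_lt (by omega : k - 1 < k)]
  · convert hasSum_choose_mul_geometric_of_norm_lt_one m hw using 3 with k
    rw [show m + 1 + k - 1 = k + m by omega, Nat.choose_symm_add]

theorem sum_range_choose_mul_zpow {K : Type*} [Field K] (ρ z c : K) (hz : z ≠ 0) (n j : ℕ) :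
    ∑ k ∈ range (n + 1), (-1 : K) ^ (n - k) * c * (n.choose k : K) * ρ ^ (k + j) *
        z ^ ((k : ℤ) - j - n) =
      ((ρ * z - 1) / z) ^ n * (c * (ρ / z) ^ j) := by
  have hzpow : ∀ k : ℕ, z ^ ((k : ℤ) - j - n) = z ^ k / z ^ j / z ^ n := fun k => by
    rw [zpow_sub₀ hz, zpow_sub₀ hz]; norm_cast
  rw [div_pow (ρ * z - 1), div_pow ρ, sub_eq_add_neg, add_pow, sum_div, sum_mul]
  refine sum_congr rfl fun k _ => ?_
  rw [hzpow]
  field_simp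
  ring

theorem div_pow_mul_one_div_one_sub_div_pow {K : Type*} [Field K] (ρ z : K) (hz : z ≠ 0)
    (n : ℕ) :
    ((ρ * z - 1) / z) ^ n * (1 / (1 - ρ / z) ^ n) = ((z - ρ) / (ρ * z - 1)) ^ (-(n : ℤ)) := by
  rw [zpow_neg, zpow_natCast, ← inv_pow, inv_div, one_sub_div hz, one_div, ← inv_pow,
    ← mul_pow, inv_div, div_mul_div_cancel₀ hz]

theorem mobius_conj_pow_fourier_expansion_general (ρ : ℝ) (hρ0 : 0 ≤ ρ) (hρ1 : ρ < 1)
    (n : ℕ) (θ : ℝ) :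
    Summable (fun k' : ℕ => ‖∑ k ∈ Finset.range (n + 1),
        ((-1 : ℂ) ^ (n - k) * ((n + k' - 1).choose k' : ℂ) * (n.choose k : ℂ) *
          (ρ : ℂ) ^ (k + k') *
          Complex.exp (Complex.I * (((k : ℤ) - k' - n : ℤ) : ℂ) * θ))‖) ∧
    HasSum (fun k' : ℕ => ∑ k ∈ Finset.range (n + 1),
        ((-1 : ℂ) ^ (n - k) * ((n + k' - 1).choose k' : ℂ) * (n.choose k : ℂ) *
          (ρ : ℂ) ^ (k + k') *
          Complex.exp (Complex.I * (((k : ℤ) - k' - n : ℤ) : ℂ) * θ)))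
      (((Complex.exp (Complex.I * θ) - ρ) / (ρ * Complex.exp (Complex.I * θ) - 1)) ^
        (-(n : ℤ))) := by
  set z : ℂ := Complex.exp (Complex.I * θ)
  have hz : z ≠ 0 := Complex.exp_ne_zero _
  have hw : ‖(ρ : ℂ) / z‖ < 1 := by
    have hz1 : ‖z‖ = 1 := by simpa only [mul_comm] using Complex.norm_exp_ofReal_mul_I θ
    rwa [norm_div, hz1, div_one, Complex.norm_real, Real.norm_of_nonneg hρ0]
  have hseries := (hasSum_choose_sub_one_mul_geometric n hw).mul_left (((ρ * z - 1) / z) ^ n)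
  rw [div_pow_mul_one_div_one_sub_div_pow _ _ hz] at hseries
  refine (fun hsum => ⟨summable_norm_iff.mpr hsum.summable, hsum⟩) ?_
  have hexp : ∀ m : ℤ, Complex.exp (Complex.I * m * θ) = z ^ m := fun m => by
    rw [← Complex.exp_int_mul]; ring_nf
  simpa only [hexp, sum_range_choose_mul_zpow _ _ _ hz] using hseries

theorem mobius_conj_pow_fourier_expansion (ρ : ℝ) (hρ0 : 0 ≤ ρ) (hρ1 : ρ < 1)
    (n : ℕ) (hn : 1 ≤ n) (θ : ℝ) :
    Summable (fun k' : ℕ => ‖∑ k ∈ Finset.range (n + 1),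
        ((-1 : ℂ) ^ (n - k) * ((n + k' - 1).choose k' : ℂ) * (n.choose k : ℂ) *
          (ρ : ℂ) ^ (k + k') *
          Complex.exp (Complex.I * (((k : ℤ) - k' - n : ℤ) : ℂ) * θ))‖) ∧
    HasSum (fun k' : ℕ => ∑ k ∈ Finset.range (n + 1),
        ((-1 : ℂ) ^ (n - k) * ((n + k' - 1).choose k' : ℂ) * (n.choose k : ℂ) *
          (ρ : ℂ) ^ (k + k') *
          Complex.exp (Complex.I * (((k : ℤ) - k' - n : ℤ) : ℂ) * θ)))
      (((Complex.exp (Complex.I * θ) - ρ) / (ρ * Complex.exp (Complex.I * θ) - 1)) ^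
        (-(n : ℤ))) :=
  mobius_conj_pow_fourier_expansion_general ρ hρ0 hρ1 n θ
end

section
/- Let 0 ≤ ρ < 1 and let m < 0 < n be integers. Then the integral (1/2π) ∫_0^{2π} e^{imθ} · conj(((e^{iθ} - ρ)/(ρe^{iθ} - 1))^n) dθ equals 0. -/
open Real Complex MeasureTheory

lemma interval_integral_conj' (f : ℝ → ℂ) (a b : ℝ) :
    (∫ x in a..b, (starRingEnd ℂ) (f x)) = (starRingEnd ℂ) (∫ x in a..b, f x) := by
  simp only [intervalIntegral, integral_conj, map_sub]

theorem mobius_fourier_matrix_block_zero (ρ : ℝ) (hρ0 : 0 ≤ ρ) (hρ1 : ρ < 1)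
    (n m : ℤ) (hm : m < 0) (hn : 0 < n) :
    (1 / (2 * (π : ℂ))) * ∫ θ in (0 : ℝ)..(2 * π),
        Complex.exp (Complex.I * m * θ) *
          (starRingEnd ℂ)
            (((Complex.exp (Complex.I * θ) - ρ) /
                (ρ * Complex.exp (Complex.I * θ) - 1)) ^ n) = 0 := by
  apply mul_eq_zero_of_right
  set k : ℕ := (-(m + 1)).toNat with hkdef
  have hk : ((k : ℤ)) = -(m + 1) := Int.toNat_of_nonneg (by omega)
  set N : ℕ := n.toNat with hNdef
  have hN : ((N : ℤ)) = n := Int.toNat_of_nonneg hn.le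
  set g : ℝ → ℂ := fun θ =>
    Complex.exp (-(Complex.I * m * θ)) *
      ((Complex.exp (Complex.I * θ) - ρ) / (ρ * Complex.exp (Complex.I * θ) - 1)) ^ n with hg
  have hden : ∀ z : ℂ, ‖z‖ ≤ 1 → (ρ : ℂ) * z - 1 ≠ 0 := by
    intro z hz h
    have h1 : (ρ : ℂ) * z = 1 := by linear_combination h
    have := congrArg norm h1
    rw [norm_mul, Complex.norm_real, Real.norm_of_nonneg hρ0, norm_one] at this
    nlinarith [norm_nonneg z]
  set F : ℂ → ℂ := fun z => z ^ k * ((z - ρ) / ((ρ : ℂ) * z - 1)) ^ N with hFdef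
  have hF0 : (∮ z in C(0, 1), F z) = 0 := by
    apply Complex.circleIntegral_eq_zero_of_differentiable_on_off_countable zero_le_one
      Set.countable_empty
    · apply ContinuousOn.mul (continuousOn_pow k)
      apply ContinuousOn.pow
      apply ContinuousOn.div (continuousOn_id.sub continuousOn_const)
        ((continuousOn_const.mul continuousOn_id).sub continuousOn_const)
      intro z hz
      exact hden z (by simpa [Metric.mem_closedBall, dist_eq_norm] using hz)
    · rintro z ⟨hz, -⟩
      apply DifferentiableAt.mul (differentiableAt_pow k)
      apply DifferentiableAt.pow
      apply DifferentiableAt.div (differentiableAt_id.sub (differentiableAt_const _))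
        (((differentiableAt_const _).mul differentiableAt_id).sub (differentiableAt_const _))
      exact hden z (by simp only [Metric.mem_ball, dist_zero_right] at hz; exact hz.le)
  have hexp : ∀ θ : ℝ, Complex.exp ((θ:ℂ) * Complex.I) * Complex.exp ((θ:ℂ) * Complex.I) ^ k
      = Complex.exp (-(Complex.I * m * θ)) := by
    intro θ
    rw [← pow_succ', ← Complex.exp_nat_mul]
    congr 1
    have h1 : ((k + 1 : ℕ) : ℂ) = -(m : ℂ) := by
      have h2 : ((k : ℤ) + 1) = -m := by omega
      calc ((k + 1 : ℕ) : ℂ) = (((k : ℤ) + 1 : ℤ) : ℂ) := by push_cast; ring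
        _ = ((-m : ℤ) : ℂ) := by rw [h2]
        _ = -(m : ℂ) := by push_cast; ring
    rw [h1]; ring
  have hcirc : (∮ z in C(0, 1), F z) = Complex.I * ∫ θ in (0:ℝ)..(2*π), g θ := by
    rw [circleIntegral, ← intervalIntegral.integral_const_mul]
    apply intervalIntegral.integral_congr
    intro θ _
    simp only [deriv_circleMap, circleMap, Complex.ofReal_one, smul_eq_mul, zero_add, one_mul]
    simp only [hFdef, hg]
    have harg : Complex.I * (θ:ℂ) = (θ:ℂ) * Complex.I := mul_comm _ _
    rw [harg, ← hN, zpow_natCast, ← hexp θ]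
    ring
  have hJ : (∫ θ in (0:ℝ)..(2*π), g θ) = 0 := by
    have h := hF0
    rw [hcirc] at h
    exact (mul_eq_zero.1 h).resolve_left Complex.I_ne_zero
  have hconj : ∀ θ : ℝ, Complex.exp (Complex.I * m * θ) *
      (starRingEnd ℂ) (((Complex.exp (Complex.I * θ) - ρ) /
        (ρ * Complex.exp (Complex.I * θ) - 1)) ^ n) = (starRingEnd ℂ) (g θ) := by
    intro θ
    simp only [hg, map_mul, ← Complex.exp_conj, map_neg, Complex.conj_I,
      Complex.conj_ofReal, map_intCast]
    ring_nf
  calc (∫ θ in (0:ℝ)..(2*π), Complex.exp (Complex.I * m * θ) *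
          (starRingEnd ℂ) (((Complex.exp (Complex.I * θ) - ρ) /
            (ρ * Complex.exp (Complex.I * θ) - 1)) ^ n))
      = ∫ θ in (0:ℝ)..(2*π), (starRingEnd ℂ) (g θ) :=
        intervalIntegral.integral_congr fun θ _ => hconj θ
    _ = (starRingEnd ℂ) (∫ θ in (0:ℝ)..(2*π), g θ) := interval_integral_conj' g 0 (2*π)
    _ = 0 := by rw [hJ, map_zero]
end

section
/- Let 0 ≤ ρ < 1 and let n, m ≥ 1 be integers. Then (1/2π) ∫_0^{2π} e^{imθ} · conj(((e^{iθ} - ρ)/(ρe^{iθ} - 1))^n) dθ = Σ_{k = max(n-m, 0)}^{n} (-1)^{n-k} · C(k + m - 1, k + m - n) · C(n, k) · ρ^{2k + m - n}. -/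
open Real Complex Finset MeasureTheory ComplexConjugate

/-! On the unit circle `conj z = z⁻¹`, so `conj (M_ρ z ^ n) = (ρ z - 1) ^ n z⁻ⁿ / (1 - ρ z⁻¹) ^ n`.
Expanding the numerator binomially and the denominator by the negative binomial series
`∑ⱼ C(j + n - 1, j) ρʲ z⁻ʲ`, orthogonality of the characters `e^{iℓθ}` keeps, for the `k`-th
binomial term, only the series term `j = k + m - n`, which exists exactly when `k ≥ n - m`. -/

lemma integral_exp_I_mul_int_mul (ℓ : ℤ) :
    ∫ θ in (0 : ℝ)..2 * π, exp (I * ℓ * θ) = if ℓ = 0 then 2 * (π : ℂ) else 0 := by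
  split_ifs with h
  · simp [h]
  · have hc : I * ℓ ≠ 0 := mul_ne_zero I_ne_zero (Int.cast_ne_zero.mpr h)
    have h2π : exp (I * ℓ * (2 * π : ℝ)) = 1 := by
      rw [show I * ℓ * (2 * π : ℝ) = ℓ * (2 * π * I) by push_cast; ring]
      exact exp_int_mul_two_pi_mul_I ℓ
    rw [integral_exp_mul_complex hc, h2π]
    simp

lemma integral_exp_mul_of_hasSum_exp_neg {b : ℕ → ℂ} (hb : Summable fun j => ‖b j‖)
    {f : ℝ → ℂ} (hf : ∀ θ : ℝ, HasSum (fun j : ℕ => b j * exp (-(I * j * θ))) (f θ)) (ℓ : ℤ) :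
    ∫ θ in (0 : ℝ)..2 * π, exp (I * ℓ * θ) * f θ =
      if 0 ≤ ℓ then 2 * π * b ℓ.toNat else 0 := by
  have hterm (j : ℕ) : ∫ θ in (0 : ℝ)..2 * π, exp (I * ℓ * θ) * (b j * exp (-(I * j * θ))) =
      if (j : ℤ) = ℓ then 2 * π * b j else 0 := by
    have (θ : ℝ) : exp (I * ℓ * θ) * (b j * exp (-(I * j * θ))) =
        b j * exp (I * (ℓ - j : ℤ) * θ) := by
      rw [mul_left_comm, ← Complex.exp_add]; push_cast; ring_nf
    simp_rw [this, intervalIntegral.integral_const_mul, integral_exp_I_mul_int_mul, sub_eq_zero,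
      eq_comm (a := ℓ)]
    split_ifs <;> ring
  have hsum : HasSum (fun j : ℕ => if (j : ℤ) = ℓ then 2 * π * b j else 0)
      (∫ θ in (0 : ℝ)..2 * π, exp (I * ℓ * θ) * f θ) := by
    simp_rw [← hterm]
    refine intervalIntegral.hasSum_integral_of_dominated_convergence (fun j _ => ‖b j‖)
      (fun j => by fun_prop) (fun j => ae_of_all _ fun θ _ => ?_) (ae_of_all _ fun _ _ => hb)
      intervalIntegrable_const (ae_of_all _ fun θ _ => (hf θ).mul_left _)
    simp [norm_exp]
  refine hsum.unique ?_
  split_ifs with h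
  · convert hasSum_ite_eq ℓ.toNat (2 * π * b ℓ.toNat) using 2 with j
    grind
  · convert hasSum_zero with j
    grind

lemma norm_mul_exp_neg_I_mul (c : ℂ) (θ : ℝ) : ‖c * exp (-(I * θ))‖ = ‖c‖ := by
  simp [norm_exp]

lemma one_sub_mul_exp_neg_I_mul_ne_zero {c : ℂ} (hc : ‖c‖ < 1) (θ : ℝ) :
    1 - c * exp (-(I * θ)) ≠ 0 := by
  rw [sub_ne_zero]
  intro h
  rw [← norm_mul_exp_neg_I_mul c θ, ← h, norm_one] at hc
  exact lt_irrefl 1 hc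

lemma integral_exp_div_one_sub_mul_exp_neg_pow {c : ℂ} (hc : ‖c‖ < 1) (n : ℕ) (ℓ : ℤ) :
    ∫ θ in (0 : ℝ)..2 * π, exp (I * ℓ * θ) / (1 - c * exp (-(I * θ))) ^ (n + 1) =
      if 0 ≤ ℓ then 2 * π * ((ℓ.toNat + n).choose ℓ.toNat * c ^ ℓ.toNat) else 0 := by
  simp_rw [div_eq_mul_one_div (Complex.exp _), Nat.choose_symm_add]
  refine integral_exp_mul_of_hasSum_exp_neg (b := fun j => (j + n).choose n * c ^ j) ?_
    (fun θ => ?_) ℓ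
  · simpa using summable_choose_mul_geometric_of_norm_lt_one n (r := ‖c‖) (by simpa using hc)
  · refine (hasSum_choose_mul_geometric_of_norm_lt_one n
      (by rwa [norm_mul_exp_neg_I_mul] : ‖c * exp (-(I * θ))‖ < 1)).congr_fun fun j => ?_
    rw [mul_pow, ← Complex.exp_nat_mul]
    ring_nf

lemma conj_mobius_of_norm_eq_one (ρ : ℝ) {z : ℂ} (hz : ‖z‖ = 1) :
    conj ((z - ρ) / (ρ * z - 1)) = (ρ * z - 1) * z⁻¹ / (1 - ρ * z⁻¹) := by
  have hz0 : z ≠ 0 := by rintro rfl; simp at hz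
  rw [map_div₀, map_sub, map_sub, map_mul, conj_ofReal, map_one, ← inv_eq_conj hz,
    ← neg_div_neg_eq, neg_sub, neg_sub]
  congr 1
  field_simp

lemma exp_mul_conj_mobius_exp_pow (ρ θ : ℝ) (n m : ℕ) :
    exp (I * m * θ) * conj (((exp (I * θ) - ρ) / (ρ * exp (I * θ) - 1)) ^ n) =
      ∑ k ∈ range (n + 1), (-1) ^ (n - k) * n.choose k * (ρ : ℂ) ^ k *
        (exp (I * (k + m - n : ℤ) * θ) / (1 - ρ * exp (-(I * θ))) ^ n) := by
  rw [map_pow, conj_mobius_of_norm_eq_one ρ (by simp [norm_exp]), ← Complex.exp_neg,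
    div_pow, mul_pow, sub_eq_add_neg _ (1 : ℂ), add_pow, sum_mul, sum_div, mul_sum]
  refine sum_congr rfl fun k _ => ?_
  have hexp : exp (I * (k + m - n : ℤ) * θ) =
      exp (I * m * θ) * exp (I * θ) ^ k * exp (-(I * θ)) ^ n := by
    rw [← Complex.exp_nat_mul, ← Complex.exp_nat_mul, ← Complex.exp_add, ← Complex.exp_add]
    push_cast
    ring_nf
  rw [hexp, mul_pow]
  ring

theorem mobius_fourier_matrix_entry_general (ρ : ℝ) (hρ0 : 0 ≤ ρ) (hρ1 : ρ < 1)
    (n m : ℕ) (hn : 1 ≤ n) :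
    (1 / (2 * (π : ℂ))) * ∫ θ in (0 : ℝ)..(2 * π),
        Complex.exp (Complex.I * m * θ) *
          (starRingEnd ℂ)
            (((Complex.exp (Complex.I * θ) - ρ) /
                (ρ * Complex.exp (Complex.I * θ) - 1)) ^ n) =
      ∑ k ∈ Finset.Icc (n - m) n,
        (-1 : ℂ) ^ (n - k) * ((k + m - 1).choose (k + m - n) : ℂ) * (n.choose k : ℂ) *
          (ρ : ℂ) ^ (2 * k + m - n) := by
  have hρ : ‖(ρ : ℂ)‖ < 1 := by rwa [norm_real, Real.norm_of_nonneg hρ0]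
  have hcont (ℓ : ℤ) :
      Continuous fun θ : ℝ => exp (I * ℓ * θ) / (1 - ρ * exp (-(I * θ))) ^ n := by
    fun_prop (disch := exact fun θ => pow_ne_zero _ (one_sub_mul_exp_neg_I_mul_ne_zero hρ θ))
  have hcoeff (ℓ : ℤ) := integral_exp_div_one_sub_mul_exp_neg_pow hρ (n - 1) ℓ
  rw [Nat.sub_add_cancel hn] at hcoeff
  simp_rw [exp_mul_conj_mobius_exp_pow]
  rw [intervalIntegral.integral_finsetSum fun k _ => ((hcont _).const_mul _).intervalIntegrable _ _]
  simp_rw [intervalIntegral.integral_const_mul, hcoeff, mul_sum]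
  have hsub : Icc (n - m) n ⊆ range (n + 1) := fun k hk => by
    rw [mem_Icc] at hk
    rw [mem_range]
    omega
  rw [← sum_subset hsub fun k hk hk' => ?_]
  · refine sum_congr rfl fun k hk => ?_
    rw [mem_Icc] at hk
    rw [if_pos (by omega), show ((k : ℤ) + m - n).toNat = k + m - n by omega,
      show k + m - n + (n - 1) = k + m - 1 by omega, show 2 * k + m - n = k + (k + m - n) by omega,
      pow_add]
    field_simp
  · rw [mem_range] at hk
    rw [mem_Icc] at hk'
    rw [if_neg (by omega), mul_zero, mul_zero]

theorem mobius_fourier_matrix_entry (ρ : ℝ) (hρ0 : 0 ≤ ρ) (hρ1 : ρ < 1)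
    (n m : ℕ) (hn : 1 ≤ n) (hm : 1 ≤ m) :
    (1 / (2 * (π : ℂ))) * ∫ θ in (0 : ℝ)..(2 * π),
        Complex.exp (Complex.I * m * θ) *
          (starRingEnd ℂ)
            (((Complex.exp (Complex.I * θ) - ρ) /
                (ρ * Complex.exp (Complex.I * θ) - 1)) ^ n) =
      ∑ k ∈ Finset.Icc (n - m) n,
        (-1 : ℂ) ^ (n - k) * ((k + m - 1).choose (k + m - n) : ℂ) * (n.choose k : ℂ) *
          (ρ : ℂ) ^ (2 * k + m - n) :=
  mobius_fourier_matrix_entry_general ρ hρ0 hρ1 n m hn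
end

section
/- Let a = ρ·e^{iζ} with 0 ≤ ρ < 1, and define H_{a,n,m} = (1/2π) ∫_0^{2π} e^{imθ} · conj(M_a(e^{iθ})^n) dθ where M_a(x) = (x - a)/(conj(a)x - 1). Then for all nonzero integers n, m: H_{a,n,m} = e^{i(m-n)ζ} · H_{ρ,n,m}. -/
open Real Complex

/-- The `(n,m)` entry of the matrix representation of composition with the Möbius
transformation `M_a(x) = (x - a)/(conj a * x - 1)` in the Fourier basis. -/
noncomputable def Hmat (a : ℂ) (n m : ℤ) : ℂ :=
  (1 / (2 * (π : ℂ))) * ∫ θ in (0 : ℝ)..(2 * π),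
    Complex.exp (Complex.I * m * θ) *
      (starRingEnd ℂ)
        (((Complex.exp (Complex.I * θ) - a) /
            ((starRingEnd ℂ) a * Complex.exp (Complex.I * θ) - 1)) ^ n)

/-- Auxiliary: the integrand of `Hmat ρ` for real `ρ`. -/
noncomputable def gAux (ρ : ℝ) (n m : ℤ) (φ : ℝ) : ℂ :=
  Complex.exp (Complex.I * m * φ) *
    (starRingEnd ℂ) (((Complex.exp (Complex.I * φ) - (ρ : ℂ)) /
      ((ρ : ℂ) * Complex.exp (Complex.I * φ) - 1)) ^ n)

lemma gAux_periodic (ρ : ℝ) (n m : ℤ) : Function.Periodic (gAux ρ n m) (2 * π) := by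
  intro φ
  have h1 : Complex.exp (Complex.I * ((φ + 2 * π : ℝ) : ℂ)) =
      Complex.exp (Complex.I * φ) := by
    push_cast
    rw [mul_add, Complex.exp_add,
      show (Complex.I * (2 * (π : ℂ))) = 2 * π * Complex.I by ring,
      Complex.exp_two_pi_mul_I, mul_one]
  have h2 : Complex.exp (Complex.I * m * ((φ + 2 * π : ℝ) : ℂ)) =
      Complex.exp (Complex.I * m * φ) := by
    push_cast
    rw [mul_add, Complex.exp_add,
      show (Complex.I * (m : ℂ) * (2 * (π : ℂ))) = (m : ℂ) * (2 * π * Complex.I) by ring,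
      Complex.exp_int_mul_two_pi_mul_I, mul_one]
  simp only [gAux, h1, h2]

theorem Hmat_phase_factor (ρ ζ : ℝ) (hρ0 : 0 ≤ ρ) (hρ1 : ρ < 1)
    (n m : ℤ) (hn : n ≠ 0) (hm : m ≠ 0) :
    Hmat (ρ * Complex.exp (Complex.I * ζ)) n m =
      Complex.exp (Complex.I * ((m : ℂ) - n) * ζ) * Hmat (ρ : ℂ) n m := by
  have hEinv : Complex.exp (Complex.I * ζ) * Complex.exp (-(Complex.I * ζ)) = 1 := by
    rw [← Complex.exp_add]; simp
  have hconjE : (starRingEnd ℂ) (Complex.exp (Complex.I * ζ)) =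
      Complex.exp (-(Complex.I * ζ)) := by
    rw [← Complex.exp_conj, map_mul, Complex.conj_I, Complex.conj_ofReal, neg_mul]
  -- pointwise identity for the integrand
  have hpt : ∀ θ : ℝ,
      Complex.exp (Complex.I * m * θ) *
        (starRingEnd ℂ)
          (((Complex.exp (Complex.I * θ) - ((ρ : ℂ) * Complex.exp (Complex.I * ζ))) /
              ((starRingEnd ℂ) ((ρ : ℂ) * Complex.exp (Complex.I * ζ)) *
                Complex.exp (Complex.I * θ) - 1)) ^ n)
        = Complex.exp (Complex.I * ((m : ℂ) - n) * ζ) * gAux ρ n m (θ - ζ) := by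
    intro θ
    have hconj : (starRingEnd ℂ) ((ρ : ℂ) * Complex.exp (Complex.I * ζ)) =
        (ρ : ℂ) * Complex.exp (-(Complex.I * ζ)) := by
      rw [map_mul, Complex.conj_ofReal, hconjE]
    have hE : Complex.exp (Complex.I * ((θ : ℂ) - ζ)) =
        Complex.exp (Complex.I * θ) * Complex.exp (-(Complex.I * ζ)) := by
      rw [← Complex.exp_add]; ring_nf
    have hMeq : (Complex.exp (Complex.I * θ) - ((ρ : ℂ) * Complex.exp (Complex.I * ζ))) /
        ((ρ : ℂ) * Complex.exp (-(Complex.I * ζ)) * Complex.exp (Complex.I * θ) - 1)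
        = Complex.exp (Complex.I * ζ) *
          ((Complex.exp (Complex.I * ((θ : ℂ) - ζ)) - (ρ : ℂ)) /
            ((ρ : ℂ) * Complex.exp (Complex.I * ((θ : ℂ) - ζ)) - 1)) := by
      rw [mul_div_assoc']
      congr 1
      · rw [hE]
        linear_combination (-Complex.exp (Complex.I * (θ : ℂ))) * hEinv
      · rw [hE]; ring
    simp only [gAux]
    rw [hconj, hMeq, mul_zpow, map_mul, map_zpow₀, map_zpow₀, hconjE,
      ← Complex.exp_int_mul]
    push_cast
    rw [← mul_assoc, ← mul_assoc, ← Complex.exp_add, ← Complex.exp_add]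
    congr 2
    · ring
    · exact (map_zpow₀ (starRingEnd ℂ) _ _).symm
  -- now the integral manipulation
  simp only [Hmat]
  have h1 : (∫ θ in (0:ℝ)..(2*π),
      Complex.exp (Complex.I * m * θ) *
        (starRingEnd ℂ)
          (((Complex.exp (Complex.I * θ) - ((ρ : ℂ) * Complex.exp (Complex.I * ζ))) /
              ((starRingEnd ℂ) ((ρ : ℂ) * Complex.exp (Complex.I * ζ)) *
                Complex.exp (Complex.I * θ) - 1)) ^ n))
      = ∫ θ in (0:ℝ)..(2*π),
          Complex.exp (Complex.I * ((m : ℂ) - n) * ζ) * gAux ρ n m (θ - ζ) := by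
    apply intervalIntegral.integral_congr
    intro θ _
    exact hpt θ
  rw [h1, intervalIntegral.integral_const_mul,
    intervalIntegral.integral_comp_sub_right (gAux ρ n m) ζ]
  have h2 : (∫ x in (0 - ζ)..(2*π - ζ), gAux ρ n m x)
      = ∫ x in (0:ℝ)..(2*π), gAux ρ n m x := by
    have : (2*π - ζ) = (0 - ζ) + 2*π := by ring
    rw [this, (gAux_periodic ρ n m).intervalIntegral_add_eq (0 - ζ) 0, zero_add]
  rw [h2]
  have h3 : (∫ θ in (0:ℝ)..(2*π),
      Complex.exp (Complex.I * m * θ) *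
        (starRingEnd ℂ)
          (((Complex.exp (Complex.I * θ) - (ρ : ℂ)) /
              ((starRingEnd ℂ) ((ρ : ℂ)) * Complex.exp (Complex.I * θ) - 1)) ^ n))
      = ∫ θ in (0:ℝ)..(2*π), gAux ρ n m θ := by
    apply intervalIntegral.integral_congr
    intro θ _
    simp [gAux, Complex.conj_ofReal]
  rw [h3]
  ring
end

section
/- Let n, m ≥ 1 be integers, 0 ≤ c, R with c + R < 1, ζ ∈ ℝ, and C = c·e^{iζ}. Then the area integral over the disk B(C, R) = {x ∈ ℂ : |x - C| < R} satisfies: -(1/π) ∫_{B(C,R)} x^{m-1} · conj(x)^{n-1} dA(x) = -e^{i(m-n)ζ} · Σ_{k=0}^{min(n,m)-1} (1/(k+1)) · C(m-1, k) · C(n-1, k) · c^{m+n-2k-2} · R^{2k+2}. -/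
open Real Complex Finset MeasureTheory Metric ComplexConjugate

/-!
Translating the disc to the origin and expanding binomially reduces the integral to the moments
`∫_{|y|<R} yⁱ ȳʲ dA`. Rotating the disc by `θ` multiplies such a moment by `e^{i(i-j)θ}`, so it
vanishes unless `i = j`; the diagonal moments `∫_{|y|<R} |y|²ⁱ dA = π R²ⁱ⁺² / (i + 1)` are radial
integrals.
-/

theorem setIntegral_ball_zero_norm_pow {E : Type*} [NormedAddCommGroup E] [NormedSpace ℝ E]
    [Nontrivial E] [FiniteDimensional ℝ E] [MeasurableSpace E] [BorelSpace E]
    (μ : Measure E) [μ.IsAddHaarMeasure] (p : ℕ) {R : ℝ} (hR : 0 ≤ R) :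
    ∫ x in ball (0 : E) R, ‖x‖ ^ p ∂μ =
      Module.finrank ℝ E * μ.real (ball 0 1) * R ^ (p + Module.finrank ℝ E) /
        (p + Module.finrank ℝ E) := by
  set d := Module.finrank ℝ E
  have hd : 0 < d := Module.finrank_pos
  have hball : ∫ x in ball (0 : E) R, ‖x‖ ^ p ∂μ =
      ∫ x, (Set.Iio R).indicator (· ^ p) ‖x‖ ∂μ := by
    rw [← integral_indicator measurableSet_ball]
    congr 1 with x
    simp [Set.indicator]
  have hradial : ∫ y in Set.Ioi (0 : ℝ), y ^ (d - 1) • (Set.Iio R).indicator (· ^ p) y =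
      ∫ y in (0)..R, y ^ (p + d - 1) := by
    rw [intervalIntegral.integral_of_le hR, integral_Ioc_eq_integral_Ioo, ← Set.Ioi_inter_Iio,
      ← setIntegral_indicator measurableSet_Iio]
    congr 1 with y
    simp only [Set.indicator_apply, smul_eq_mul]
    split_ifs
    · rw [← pow_add]; congr 1; omega
    · simp
  have hexp : p + d - 1 + 1 = p + d := by omega
  rw [hball, integral_fun_norm_addHaar, hradial, integral_pow, ← Nat.cast_add_one, hexp,
    nsmul_eq_mul, smul_eq_mul, zero_pow (by omega)]
  push_cast
  ring

theorem setIntegral_ball_eq_setIntegral_ball_zero_comp_add {E F : Type*} [NormedAddCommGroup E]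
    [MeasurableSpace E] [BorelSpace E] [NormedAddCommGroup F] [NormedSpace ℝ F]
    (μ : Measure E) [μ.IsAddLeftInvariant] (f : E → F) (x : E) (R : ℝ) :
    ∫ y in ball x R, f y ∂μ = ∫ y in ball 0 R, f (x + y) ∂μ := by
  have hpre : (x + ·) ⁻¹' ball x R = ball 0 R := by
    ext y; simp [dist_eq_norm]
  rw [← hpre, (measurePreserving_add_left μ x).setIntegral_preimage_emb
    (Homeomorph.addLeft x).measurableEmbedding]

theorem setIntegral_ball_zero_comp_circle_mul {F : Type*} [NormedAddCommGroup F]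
    [NormedSpace ℝ F] (w : Circle) (R : ℝ) (f : ℂ → F) :
    ∫ y in ball (0 : ℂ) R, f (w * y) = ∫ y in ball (0 : ℂ) R, f y := by
  have hpre : rotation w ⁻¹' ball 0 R = ball 0 R := by
    rw [LinearIsometryEquiv.preimage_ball, map_zero]
  simpa only [hpre, rotation_apply] using (rotation w).measurePreserving.setIntegral_preimage_emb
    (rotation w).toHomeomorph.measurableEmbedding f (ball 0 R)

theorem setIntegral_ball_zero_pow_mul_conj_pow_of_ne {a b : ℕ} (hab : a ≠ b) (R : ℝ) :
    ∫ y in ball (0 : ℂ) R, y ^ a * conj y ^ b = 0 := by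
  set w := Circle.exp (π / ((a : ℝ) - b))
  have hw : (w : ℂ) ^ a * conj (w : ℂ) ^ b = -1 := by
    have hab' : (a : ℂ) - b ≠ 0 := sub_ne_zero.mpr (Nat.cast_injective.ne hab)
    rw [Circle.coe_exp, ← Complex.exp_conj, ← Complex.exp_nat_mul, ← Complex.exp_nat_mul,
      ← Complex.exp_add, ← Complex.exp_pi_mul_I]
    congr 1
    simp only [map_mul, Complex.conj_ofReal, Complex.conj_I]
    push_cast
    field_simp
    ring
  have hrot := setIntegral_ball_zero_comp_circle_mul w R (fun y => y ^ a * conj y ^ b)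
  simp only [map_mul, mul_pow, mul_mul_mul_comm _ _ (conj (w : ℂ) ^ b), hw,
    integral_const_mul] at hrot
  linear_combination -hrot / 2

theorem setIntegral_ball_zero_pow_mul_conj_pow_self (a : ℕ) {R : ℝ} (hR : 0 ≤ R) :
    ∫ y in ball (0 : ℂ) R, y ^ a * conj y ^ a = π * R ^ (2 * a + 2) / (a + 1) := by
  have hnorm : ∀ y : ℂ, y ^ a * conj y ^ a = ((‖y‖ ^ (2 * a) : ℝ) : ℂ) := fun y => by
    rw [← mul_pow, Complex.mul_conj, Complex.normSq_eq_norm_sq, pow_mul]; push_cast; rfl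
  have hvol : volume.real (ball (0 : ℂ) 1) = π := by simp [Measure.real]
  simp_rw [hnorm]
  rw [integral_complex_ofReal, setIntegral_ball_zero_norm_pow volume _ hR,
    Complex.finrank_real_complex, hvol]
  have : (a : ℂ) + 1 ≠ 0 := Nat.cast_add_one_ne_zero a
  push_cast
  field_simp

theorem setIntegral_ball_zero_pow_mul_conj_pow (i j : ℕ) {R : ℝ} (hR : 0 ≤ R) :
    ∫ y in ball (0 : ℂ) R, y ^ i * conj y ^ j =
      if i = j then (π * R ^ (2 * i + 2) / (i + 1) : ℂ) else 0 := by
  split_ifs with h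
  · subst h; exact setIntegral_ball_zero_pow_mul_conj_pow_self i hR
  · exact setIntegral_ball_zero_pow_mul_conj_pow_of_ne h R

theorem integrableOn_ball_pow_mul_conj_pow (i j : ℕ) (x : ℂ) (R : ℝ) :
    IntegrableOn (fun y : ℂ => y ^ i * conj y ^ j) (ball x R) :=
  ((continuous_pow i).mul (Complex.continuous_conj.pow j)).locallyIntegrable.integrableOn_isCompact
    (isCompact_closedBall x R) |>.mono_set ball_subset_closedBall

theorem setIntegral_ball_pow_mul_conj_pow (M N : ℕ) (x : ℂ) {R : ℝ} (hR : 0 ≤ R) :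
    ∫ y in ball x R, y ^ M * conj y ^ N =
      ∑ k ∈ range (min M N + 1), x ^ (M - k) * conj x ^ (N - k) * M.choose k * N.choose k *
        (π * R ^ (2 * k + 2) / (k + 1)) := by
  have hexpand : ∀ y : ℂ, (x + y) ^ M * conj (x + y) ^ N =
      ∑ i ∈ range (M + 1), ∑ j ∈ range (N + 1),
        x ^ (M - i) * conj x ^ (N - j) * M.choose i * N.choose j * (y ^ i * conj y ^ j) := by
    intro y
    rw [add_comm x y, add_pow, map_add, add_pow, sum_mul_sum]
    refine sum_congr rfl fun i _ => sum_congr rfl fun j _ => ?_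
    ring
  have hint : ∀ i j, IntegrableOn (fun y : ℂ => x ^ (M - i) * conj x ^ (N - j) * M.choose i *
      N.choose j * (y ^ i * conj y ^ j)) (ball 0 R) := fun i j =>
    (integrableOn_ball_pow_mul_conj_pow i j 0 R).const_mul _
  rw [setIntegral_ball_eq_setIntegral_ball_zero_comp_add, ← min_add_add_right, ← range_inter_range,
    ← sum_ite_mem]
  simp_rw [hexpand]
  rw [integral_finsetSum _ fun i _ => integrable_finsetSum _ fun j _ => hint i j]
  refine sum_congr rfl fun i _ => ?_
  rw [integral_finsetSum _ fun j _ => hint i j]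
  simp only [integral_const_mul, setIntegral_ball_zero_pow_mul_conj_pow _ _ hR, mul_ite, mul_zero,
    sum_ite_eq]

theorem ofReal_mul_exp_pow_mul_conj_pow (c ζ : ℝ) (a b : ℕ) :
    ((c : ℂ) * Complex.exp (I * ζ)) ^ a * conj ((c : ℂ) * Complex.exp (I * ζ)) ^ b =
      (c : ℂ) ^ (a + b) * Complex.exp (I * ((a : ℂ) - b) * ζ) := by
  rw [map_mul, Complex.conj_ofReal, ← Complex.exp_conj, mul_pow, mul_pow, pow_add,
    ← Complex.exp_nat_mul, ← Complex.exp_nat_mul, mul_mul_mul_comm, ← Complex.exp_add]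
  simp only [map_mul, Complex.conj_I, Complex.conj_ofReal]
  ring_nf

theorem frechet_derivative_entry_general (n m : ℕ) (hn : 1 ≤ n) (hm : 1 ≤ m)
    (c R ζ : ℝ) (hR : 0 ≤ R) :
    -(1 / (π : ℂ)) * ∫ x in Metric.ball ((c : ℂ) * Complex.exp (Complex.I * ζ)) R,
        x ^ (m - 1) * (starRingEnd ℂ) x ^ (n - 1) =
      -Complex.exp (Complex.I * ((m : ℂ) - n) * ζ) *
        ∑ k ∈ Finset.range (min n m),
          (1 / ((k : ℂ) + 1)) * ((m - 1).choose k : ℂ) * ((n - 1).choose k : ℂ) *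
            (c : ℂ) ^ (m + n - 2 * k - 2) * (R : ℂ) ^ (2 * k + 2) := by
  have hmin : min (m - 1) (n - 1) + 1 = min n m := by omega
  rw [setIntegral_ball_pow_mul_conj_pow _ _ _ hR, hmin, mul_sum, mul_sum]
  refine sum_congr rfl fun k hk_mem => ?_
  have hk : k < min n m := mem_range.mp hk_mem
  have hdeg : m - 1 - k + (n - 1 - k) = m + n - 2 * k - 2 := by omega
  have hphase : ((m - 1 - k : ℕ) : ℂ) - (n - 1 - k : ℕ) = m - n := by
    rw [Nat.sub_sub, Nat.sub_sub, Nat.cast_sub (by omega : 1 + k ≤ m),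
      Nat.cast_sub (by omega : 1 + k ≤ n)]
    ring
  rw [ofReal_mul_exp_pow_mul_conj_pow, hdeg, hphase]
  have hπ : (π : ℂ) ≠ 0 := Complex.ofReal_ne_zero.mpr pi_ne_zero
  field_simp

theorem frechet_derivative_entry (n m : ℕ) (hn : 1 ≤ n) (hm : 1 ≤ m)
    (c R ζ : ℝ) (hc : 0 ≤ c) (hR : 0 ≤ R) (hcR : c + R < 1) :
    -(1 / (π : ℂ)) * ∫ x in Metric.ball ((c : ℂ) * Complex.exp (Complex.I * ζ)) R,
        x ^ (m - 1) * (starRingEnd ℂ) x ^ (n - 1) =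
      -Complex.exp (Complex.I * ((m : ℂ) - n) * ζ) *
        ∑ k ∈ Finset.range (min n m),
          (1 / ((k : ℂ) + 1)) * ((m - 1).choose k : ℂ) * ((n - 1).choose k : ℂ) *
            (c : ℂ) ^ (m + n - 2 * k - 2) * (R : ℂ) ^ (2 * k + 2) :=
  frechet_derivative_entry_general n m hn hm c R ζ hR
end
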